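/- arXiv:1202.1342 — 5 statements merged into one kernel-verified Lean document; each statement's English description precedes it below -/
import Mathlib

section
/- For every s ∈ [0,1], the double integral over (x,y) ∈ [0,1]² of G(x,y)(s) equals h(s), where G(x,y)(s) := 1_{s<x}·((xy)^β + (x(1−y))^β)·h(s/x) + 1_{s≥x}·(((1−x)y)^β + ((1−x)(1−y))^β)·h((s−x)/(1−x)). Equivalently: if U and V are independent random variables uniformly distributed on [0,1], then E[G(U,V)(s)] = h(s). (This is the one-step martingale identity for the construction of the limit process, Lemma 5.1 of the paper.) -/
open MeasureTheory Real Set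

/-- The exponent `β = (√17 - 3)/2`, the positive root of `(β+1)(β+2) = 4`. -/
noncomputable def β : ℝ := (Real.sqrt 17 - 3) / 2

/-- The scaling function `h(s) = (s(1-s))^{β/2}`. -/
noncomputable def h (s : ℝ) : ℝ := (s * (1 - s)) ^ (β / 2)

lemma beta_pos : 0 < β := by
  have h1 : (3:ℝ) < Real.sqrt 17 := by
    have := Real.sq_sqrt (by norm_num : (17:ℝ) ≥ 0)
    nlinarith [Real.sqrt_nonneg (17:ℝ)]
  unfold β; linarith

lemma beta_eq : (β + 1) * (β + 2) = 4 := by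
  have := Real.sq_sqrt (by norm_num : (17:ℝ) ≥ 0)
  unfold β; nlinarith

lemma cont_rpow_beta : Continuous (fun x : ℝ => x ^ β) :=
  Real.continuous_rpow_const beta_pos.le

lemma cont_rpow_halfbeta : Continuous (fun x : ℝ => x ^ (β / 2)) :=
  Real.continuous_rpow_const (by linarith [beta_pos])

/-- `∫₀¹ y^β dy = 1/(β+1)` -/
lemma int_rpow_beta : (∫ y in (0:ℝ)..1, y ^ β) = 1 / (β + 1) := by
  rw [integral_rpow (Or.inl (by linarith [beta_pos]))]
  rw [Real.one_rpow, Real.zero_rpow (by linarith [beta_pos])]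
  norm_num

lemma int_rpow_beta' : (∫ y in (0:ℝ)..1, (1 - y) ^ β) = 1 / (β + 1) := by
  have := intervalIntegral.integral_comp_sub_left (a := 0) (b := 1)
    (fun t : ℝ => t ^ β) 1
  simp only [sub_self, sub_zero] at this
  rw [this, int_rpow_beta]

/-- Inner integral in `y`. -/
lemma int_y (a : ℝ) (ha : 0 ≤ a) :
    (∫ y in (0:ℝ)..1, ((a * y) ^ β + (a * (1 - y)) ^ β))
      = 2 / (β + 1) * a ^ β := by
  have heq : Set.EqOn (fun y : ℝ => ((a * y) ^ β + (a * (1 - y)) ^ β))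
      (fun y : ℝ => a ^ β * y ^ β + a ^ β * (1 - y) ^ β) (Set.uIcc 0 1) := by
    intro y hy
    rw [Set.uIcc_of_le (by norm_num : (0:ℝ) ≤ 1)] at hy
    simp only
    rw [Real.mul_rpow ha hy.1, Real.mul_rpow ha (by linarith [hy.2])]
  rw [intervalIntegral.integral_congr heq]
  have i1 : IntervalIntegrable (fun y : ℝ => a ^ β * y ^ β) volume 0 1 :=
    (continuous_const.mul cont_rpow_beta).intervalIntegrable 0 1
  have i2 : IntervalIntegrable (fun y : ℝ => a ^ β * (1 - y) ^ β) volume 0 1 :=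
    (continuous_const.mul (cont_rpow_beta.comp
      (continuous_const.sub continuous_id))).intervalIntegrable 0 1
  rw [intervalIntegral.integral_add i1 i2]
  rw [intervalIntegral.integral_const_mul, intervalIntegral.integral_const_mul,
    int_rpow_beta, int_rpow_beta']
  ring

/-- key scaling identity: for `0 < t` and `0 ≤ u ≤ t`,
`t^β * h(u/t) = (u*(t-u))^(β/2)`. -/
lemma key_scale (t u : ℝ) (ht : 0 < t) (hu : 0 ≤ u) (hut : u ≤ t) :
    t ^ β * h (u / t) = (u * (t - u)) ^ (β / 2) := by
  have ht' : t ≠ 0 := ht.ne'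
  have h1 : (1 : ℝ) - u / t = (t - u) / t := by field_simp
  have h2 : u / t * ((t - u) / t) = u * (t - u) / t ^ 2 := by
    rw [div_mul_div_comm, sq]
  unfold h
  rw [h1, h2]
  rw [Real.div_rpow (mul_nonneg hu (by linarith)) (by positivity)]
  have h3 : (t ^ 2) ^ (β / 2) = t ^ β := by
    rw [← Real.rpow_natCast t 2, ← Real.rpow_mul ht.le]
    congr 1
    push_cast
    ring
  rw [h3, mul_div_cancel₀ _ (ne_of_gt (Real.rpow_pos_of_pos ht β))]

lemma rpow_succ (x : ℝ) (hx : 0 ≤ x) : x ^ (β / 2 + 1) = x ^ (β / 2) * x := by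
  rcases eq_or_lt_of_le hx with h0 | h0
  · rw [← h0, Real.zero_rpow (by linarith [beta_pos]), mul_zero]
  · exact Real.rpow_add_one h0.ne' _

/-- Value of the inner integral. -/
lemma inner_eq (s x : ℝ) (hs0 : 0 ≤ s) (hs1 : s ≤ 1) (hx0 : 0 ≤ x) (hx1 : x ≤ 1) :
    (∫ y in (0:ℝ)..1,
        (if s < x then ((x * y) ^ β + (x * (1 - y)) ^ β) * h (s / x)
         else (((1 - x) * y) ^ β + ((1 - x) * (1 - y)) ^ β) * h ((s - x) / (1 - x))))
      = 2 / (β + 1) *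
        (if s < x then (s * (x - s)) ^ (β / 2) else ((s - x) * (1 - s)) ^ (β / 2)) := by
  by_cases hc : s < x
  · simp only [if_pos hc]
    rw [intervalIntegral.integral_mul_const, int_y x hx0]
    have hxpos : 0 < x := lt_of_le_of_lt hs0 hc
    rw [mul_assoc, key_scale x s hxpos hs0 hc.le]
  · simp only [if_neg hc]
    push_neg at hc
    rw [intervalIntegral.integral_mul_const, int_y (1 - x) (by linarith)]
    rcases eq_or_lt_of_le hx1 with h1 | h1
    · -- x = 1, hence s = 1
      have hsx : s = 1 := le_antisymm hs1 (h1 ▸ hc)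
      subst hsx
      rw [← h1]
      have hb2 : β / 2 ≠ 0 := (by linarith [beta_pos] : (0:ℝ) < β / 2).ne'
      simp only [sub_self, zero_div, zero_mul, mul_zero]
      rw [Real.zero_rpow beta_pos.ne', Real.zero_rpow hb2]
      simp [h, Real.zero_rpow hb2]
    · rw [mul_assoc, key_scale (1 - x) (s - x) (by linarith) (by linarith) (by linarith)]
      congr 1
      ring

lemma eqOn_congr_interval (f g : ℝ → ℝ) (a b : ℝ)
    (hfg : Set.EqOn f g (Set.uIcc a b)) (hg : IntervalIntegrable g volume a b) :
    IntervalIntegrable f volume a b := by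
  rw [intervalIntegrable_iff] at *
  exact (hg.congr_fun (fun y hy => (hfg (Set.Ioc_subset_Icc_self hy :
    y ∈ Set.uIcc a b)).symm) measurableSet_uIoc)

/-- One-step martingale identity: for every `s ∈ [0,1]`, the double integral of
`G(x,y)(s)` over `(x,y) ∈ [0,1]²` equals `h(s)`, where
`G(x,y)(s) = 1_{s<x}((xy)^β + (x(1-y))^β) h(s/x)
           + 1_{s≥x}(((1-x)y)^β + ((1-x)(1-y))^β) h((s-x)/(1-x))`. -/
theorem one_step_martingale_identity :
    ∀ s ∈ Set.Icc (0 : ℝ) 1,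
      (∫ x in (0:ℝ)..1, ∫ y in (0:ℝ)..1,
        (if s < x then ((x * y) ^ β + (x * (1 - y)) ^ β) * h (s / x)
         else (((1 - x) * y) ^ β + ((1 - x) * (1 - y)) ^ β) * h ((s - x) / (1 - x))))
      = h s := by
  rintro s ⟨hs0, hs1⟩
  have hb := beta_pos
  set g : ℝ → ℝ := fun x => 2 / (β + 1) *
    (if s < x then (s * (x - s)) ^ (β / 2) else ((s - x) * (1 - s)) ^ (β / 2)) with hg
  have step1 : (∫ x in (0:ℝ)..1, ∫ y in (0:ℝ)..1,
        (if s < x then ((x * y) ^ β + (x * (1 - y)) ^ β) * h (s / x)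
         else (((1 - x) * y) ^ β + ((1 - x) * (1 - y)) ^ β) * h ((s - x) / (1 - x))))
      = ∫ x in (0:ℝ)..1, g x := by
    apply intervalIntegral.integral_congr
    intro x hx
    rw [Set.uIcc_of_le (by norm_num : (0:ℝ) ≤ 1)] at hx
    exact inner_eq s x hs0 hs1 hx.1 hx.2
  rw [step1]
  -- continuous versions of the two branches
  set c₁ : ℝ → ℝ := fun x => 2 / (β + 1) * ((s - x) * (1 - s)) ^ (β / 2) with hc₁
  set c₂ : ℝ → ℝ := fun x => 2 / (β + 1) * (s * (x - s)) ^ (β / 2) with hc₂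
  have hc₁cont : Continuous c₁ :=
    continuous_const.mul (cont_rpow_halfbeta.comp
      ((continuous_const.sub continuous_id).mul continuous_const))
  have hc₂cont : Continuous c₂ :=
    continuous_const.mul (cont_rpow_halfbeta.comp
      (continuous_const.mul (continuous_id.sub continuous_const)))
  have heq₁ : Set.EqOn g c₁ (Set.uIcc 0 s) := by
    intro x hx
    rw [Set.uIcc_of_le hs0] at hx
    simp only [hg, hc₁, if_neg (not_lt.mpr hx.2)]
  have heq₂ : Set.EqOn g c₂ (Set.uIcc s 1) := by
    intro x hx
    rw [Set.uIcc_of_le hs1] at hx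
    by_cases hsx : s < x
    · simp only [hg, hc₂, if_pos hsx]
    · have hxs : x = s := le_antisymm (not_lt.mp hsx) hx.1
      simp only [hg, hc₂, hxs, if_neg (lt_irrefl s), sub_self, zero_mul, mul_zero]
  have hint₁ : IntervalIntegrable g volume 0 s :=
    eqOn_congr_interval g c₁ 0 s heq₁ (hc₁cont.intervalIntegrable 0 s)
  have hint₂ : IntervalIntegrable g volume s 1 :=
    eqOn_congr_interval g c₂ s 1 heq₂ (hc₂cont.intervalIntegrable s 1)
  rw [← intervalIntegral.integral_add_adjacent_intervals hint₁ hint₂]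
  rw [intervalIntegral.integral_congr heq₁, intervalIntegral.integral_congr heq₂]
  -- compute the two integrals
  have hI₁ : (∫ x in (0:ℝ)..s, c₁ x)
      = 2 / (β + 1) * ((1 - s) ^ (β / 2) * (s ^ (β / 2 + 1) / (β / 2 + 1))) := by
    have heq : Set.EqOn c₁ (fun x => 2 / (β + 1) * (1 - s) ^ (β / 2) * (s - x) ^ (β / 2))
        (Set.uIcc 0 s) := by
      intro x hx
      rw [Set.uIcc_of_le hs0] at hx
      simp only [hc₁]
      rw [Real.mul_rpow (by linarith [hx.2]) (by linarith)]
      ring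
    rw [intervalIntegral.integral_congr heq, intervalIntegral.integral_const_mul]
    have hsub := intervalIntegral.integral_comp_sub_left (a := 0) (b := s)
      (fun t : ℝ => t ^ (β / 2)) s
    simp only [sub_self, sub_zero] at hsub
    rw [hsub, integral_rpow (Or.inl (by linarith))]
    rw [Real.zero_rpow (by linarith : (0:ℝ) < β / 2 + 1).ne']
    ring
  have hI₂ : (∫ x in s..1, c₂ x)
      = 2 / (β + 1) * (s ^ (β / 2) * ((1 - s) ^ (β / 2 + 1) / (β / 2 + 1))) := by
    have heq : Set.EqOn c₂ (fun x => 2 / (β + 1) * s ^ (β / 2) * (x - s) ^ (β / 2))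
        (Set.uIcc s 1) := by
      intro x hx
      rw [Set.uIcc_of_le hs1] at hx
      simp only [hc₂]
      rw [Real.mul_rpow hs0 (by linarith [hx.1])]
      ring
    rw [intervalIntegral.integral_congr heq, intervalIntegral.integral_const_mul]
    have hsub := intervalIntegral.integral_comp_sub_right (a := s) (b := 1)
      (fun t : ℝ => t ^ (β / 2)) s
    simp only [sub_self] at hsub
    rw [hsub, integral_rpow (Or.inl (by linarith))]
    rw [Real.zero_rpow (by linarith : (0:ℝ) < β / 2 + 1).ne']
    ring
  rw [hI₁, hI₂]
  -- final algebra
  unfold h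
  rw [Real.mul_rpow hs0 (by linarith), rpow_succ s hs0, rpow_succ (1 - s) (by linarith)]
  have hkey : (β + 1) * (β / 2 + 1) = 2 := by nlinarith [beta_eq]
  have h1 : (β : ℝ) + 1 ≠ 0 := by linarith
  have h2 : (β : ℝ) / 2 + 1 ≠ 0 := by linarith
  field_simp
  linear_combination (-(s ^ (β / 2) * (1 - s) ^ (β / 2))) * beta_eq
end

section
/- For every real c ∈ (0,1) and every integer n ≥ 1, the n-dimensional Lebesgue measure of the set {x ∈ [0,1]^n : ∏_{i=1}^n x_i ≥ c^n} is at most (e·log(1/c))^n. Equivalently, if U_1, …, U_n are i.i.d. uniform on [0,1], then P(U_1·U_2⋯U_n ≥ c^n) ≤ (e·log(1/c))^n. (This is the key estimate in the paper's bound on the maximum width of a cell at level n of a random quadtree, Lemma A.1.) -/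
/-!
Chernoff's method: on the event `c ^ n ≤ ∏ xᵢ` the weight `∏ (xᵢ / c) ^ r` is at least `1`
for every `r ≥ 0`, and its integral over the cube is `(c ^ (-r) / (r + 1)) ^ n`. With
`t = log (1 / c)` the choice `r + 1 = 1 / t` gives `c ^ (-r) = exp (1 - t) ≤ e`; when `t ≥ 1`
the choice `r = 0` (the trivial bound `1`) suffices.
-/

open MeasureTheory Real Set

theorem integral_indicator_Icc_zero_one_rpow {r : ℝ} (hr : -1 < r) :
    ∫ y, (Icc (0 : ℝ) 1).indicator (· ^ r) y = (r + 1)⁻¹ := by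
  rw [integral_indicator measurableSet_Icc, integral_Icc_eq_integral_Ioc,
    ← intervalIntegral.integral_of_le zero_le_one, integral_rpow (.inl hr), one_rpow,
    zero_rpow (by linarith), sub_zero, one_div]

theorem volume_prod_ge_pow_le {ι : Type*} [Fintype ι] {c r : ℝ} (hc : 0 < c) (hr : 0 ≤ r) :
    volume {x : ι → ℝ | (∀ i, x i ∈ Icc 0 1) ∧ c ^ Fintype.card ι ≤ ∏ i, x i}
      ≤ ENNReal.ofReal ((c ^ (-r) * (r + 1)⁻¹) ^ Fintype.card ι) := by
  set g : ℝ → ℝ := fun y => c ^ (-r) * (Icc (0 : ℝ) 1).indicator (· ^ r) y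
  have hg_int : Integrable g :=
    ((continuous_id.rpow_const fun _ => .inr hr).integrableOn_Icc.integrable_indicator
      measurableSet_Icc).const_mul _
  have hg_nonneg : 0 ≤ g := fun y =>
    mul_nonneg (rpow_nonneg hc.le _) (indicator_nonneg (fun y hy => rpow_nonneg hy.1 _) y)
  have hF_int : Integrable (fun x : ι → ℝ => ∏ i, g (x i)) :=
    .fintype_prod fun _ => hg_int
  have hweight : ∀ x : ι → ℝ, (∀ i, x i ∈ Icc 0 1) →
      c ^ Fintype.card ι ≤ ∏ i, x i → 1 ≤ ∏ i, g (x i) := by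
    intro x hx hprod
    calc (1 : ℝ) = (c ^ (-r)) ^ Fintype.card ι * (c ^ Fintype.card ι) ^ r := by
          rw [← rpow_pow_comm hc.le, ← mul_pow, ← rpow_add hc, neg_add_cancel, rpow_zero,
            one_pow]
      _ ≤ (c ^ (-r)) ^ Fintype.card ι * (∏ i, x i) ^ r := by gcongr
      _ = ∏ i, g (x i) := by
          rw [← finsetProd_rpow _ _ (fun i _ => (hx i).1), ← Finset.card_univ,
            ← Finset.prod_const, ← Finset.prod_mul_distrib]
          exact Finset.prod_congr rfl fun i _ => by simp only [g, indicator_of_mem (hx i)]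
  calc _ ≤ volume {x : ι → ℝ | 1 ≤ ENNReal.ofReal (∏ i, g (x i))} := by
        refine measure_mono fun x hx => ?_
        simpa using hweight x hx.1 hx.2
    _ ≤ ∫⁻ x : ι → ℝ, ENNReal.ofReal (∏ i, g (x i)) := by
        simpa using mul_meas_ge_le_lintegral₀ hF_int.aemeasurable.ennreal_ofReal 1
    _ = ENNReal.ofReal (∫ x : ι → ℝ, ∏ i, g (x i)) :=
        (ofReal_integral_eq_lintegral_ofReal hF_int
          (.of_forall fun x => Finset.prod_nonneg fun i _ => hg_nonneg _)).symm
    _ = _ := by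
        rw [integral_fintype_prod_volume_eq_pow, integral_const_mul,
          integral_indicator_Icc_zero_one_rpow (by linarith)]

theorem exists_rpow_neg_mul_inv_add_one_le {c : ℝ} (hc : c ∈ Ioo 0 1) :
    ∃ r : ℝ, 0 ≤ r ∧ c ^ (-r) * (r + 1)⁻¹ ≤ exp 1 * log (1 / c) := by
  obtain ⟨hc0, hc1⟩ := hc
  set t := log (1 / c)
  have ht : 0 < t := log_pos ((one_lt_div hc0).2 hc1)
  rcases le_or_gt 1 t with ht1 | ht1
  · refine ⟨0, le_rfl, ?_⟩
    rw [neg_zero, rpow_zero, zero_add, inv_one, one_mul]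
    nlinarith [add_one_le_exp 1]
  · refine ⟨t⁻¹ - 1, sub_nonneg.2 (one_le_inv₀ ht |>.2 ht1.le), ?_⟩
    have hlog : log c = -t := by simp [t]
    rw [rpow_def_of_pos hc0, hlog, sub_add_cancel, inv_inv]
    gcongr
    nlinarith [mul_inv_cancel₀ ht.ne']

theorem product_uniform_large_bound_general (c : ℝ) (hc : c ∈ Set.Ioo (0 : ℝ) 1)
    (n : ℕ) :
    MeasureTheory.volume
        {x : Fin n → ℝ | (∀ i, x i ∈ Set.Icc (0 : ℝ) 1) ∧ c ^ n ≤ ∏ i, x i}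
      ≤ ENNReal.ofReal ((Real.exp 1 * Real.log (1 / c)) ^ n) := by
  obtain ⟨r, hr, hbound⟩ := exists_rpow_neg_mul_inv_add_one_le hc
  have hchernoff := volume_prod_ge_pow_le (ι := Fin n) hc.1 hr
  rw [Fintype.card_fin] at hchernoff
  refine hchernoff.trans (ENNReal.ofReal_le_ofReal ?_)
  gcongr
  exact mul_nonneg (rpow_nonneg hc.1.le _) (inv_nonneg.2 (by linarith))

/-- Bound on the probability that a product of `n` i.i.d. uniforms on `[0,1]`
exceeds `c^n`: the `n`-dimensional Lebesgue measure of
`{x ∈ [0,1]^n : ∏ i, x i ≥ c^n}` is at most `(e ⋅ log(1/c))^n`. -/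
theorem product_uniform_large_bound (c : ℝ) (hc : c ∈ Set.Ioo (0 : ℝ) 1)
    (n : ℕ) (hn : 1 ≤ n) :
    MeasureTheory.volume
        {x : Fin n → ℝ | (∀ i, x i ∈ Set.Icc (0 : ℝ) 1) ∧ c ^ n ≤ ∏ i, x i}
      ≤ ENNReal.ofReal ((Real.exp 1 * Real.log (1 / c)) ^ n) :=
  product_uniform_large_bound_general c hc n
end

section
/- For every real x > 22 and every integer n ≥ 1, the 2n-dimensional Lebesgue measure of the set {u ∈ [0,1]^{2n} : ∏_{i=1}^{2n} u_i ≤ (2/x)^n} is at most x^{−n/100}. Equivalently, if U_1, V_1, …, U_n, V_n are i.i.d. uniform random variables on [0,1], then P(U_1 V_1 ⋯ U_n V_n ≤ (2/x)^n) ≤ x^{−n/100}. (This is the large-deviations estimate, inequality (B.2), used in the paper's bound on the fill-up level of a random quadtree.) -/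
open MeasureTheory Real Set
open scoped ENNReal

/-- lintegral version of `integral_fintype_prod_eq_pow` for `Fin m → ℝ`. -/
lemma lintegral_pi_prod_eq_pow {m : ℕ} (f : ℝ → ℝ≥0∞) (hf : Measurable f) :
    ∫⁻ u : Fin m → ℝ, ∏ i, f (u i) = (∫⁻ t, f t) ^ m := by
  induction m with
  | zero => simp [MeasureTheory.lintegral_const, volume_pi]
  | succ n ih =>
    have hmp := (measurePreserving_piFinSuccAbove
      (fun _ : Fin (n + 1) => (volume : Measure ℝ)) 0).symm
    rw [volume_pi, ← hmp.lintegral_comp_emb (MeasurableEquiv.measurableEmbedding _)]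
    simp_rw [MeasurableEquiv.piFinSuccAbove_symm_apply, Fin.insertNthEquiv,
      Fin.prod_univ_succ, Fin.insertNth_zero]
    simp only [Fin.zero_succAbove, cast_eq, Equiv.coe_fn_mk, Function.comp_def, Fin.cons_zero,
      Fin.cons_succ]
    have hmeas : AEMeasurable (fun b : Fin n → ℝ => ∏ j, f (b j))
        (Measure.pi fun _ => volume) := by
      exact (Finset.measurable_prod Finset.univ
        (fun j _ => hf.comp (measurable_pi_apply j))).aemeasurable
    rw [MeasureTheory.lintegral_prod_mul hf.aemeasurable hmeas]
    have : ∫⁻ b : Fin n → ℝ, ∏ j, f (b j) ∂(Measure.pi fun _ => volume)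
        = (∫⁻ t, f t) ^ n := by
      rw [← volume_pi]; exact ih
    rw [this, pow_succ, mul_comm]

lemma key_numeric : (2 : ℝ) ^ ((1 : ℝ) / 5) * (25 / 16) ≤ (22 : ℝ) ^ ((19 : ℝ) / 100) := by
  have h2 : (0 : ℝ) ≤ (2 : ℝ) ^ ((1 : ℝ) / 5) * (25 / 16) := by positivity
  have h22 : (0 : ℝ) ≤ (22 : ℝ) ^ ((19 : ℝ) / 100) := by positivity
  rw [← pow_le_pow_iff_left₀ h2 h22 (n := 100) (by norm_num)]
  have e1 : ((2 : ℝ) ^ ((1 : ℝ) / 5)) ^ (100 : ℕ) = 2 ^ (20 : ℕ) := by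
    rw [← Real.rpow_natCast ((2:ℝ) ^ ((1:ℝ)/5)) 100, ← Real.rpow_mul (by norm_num)]
    norm_num
  have e2 : ((22 : ℝ) ^ ((19 : ℝ) / 100)) ^ (100 : ℕ) = 22 ^ (19 : ℕ) := by
    rw [← Real.rpow_natCast ((22:ℝ) ^ ((19:ℝ)/100)) 100, ← Real.rpow_mul (by norm_num)]
    norm_num
  rw [mul_pow, e1, e2]
  norm_num

lemma key_scalar (x : ℝ) (hx : 22 < x) :
    (2 / x) ^ ((1 : ℝ) / 5) * (25 / 16) ≤ x ^ (-(1 : ℝ) / 100) := by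
  have hx0 : (0 : ℝ) < x := by linarith
  have hkey : (2 : ℝ) ^ ((1 : ℝ) / 5) * (25 / 16) ≤ x ^ ((19 : ℝ) / 100) :=
    key_numeric.trans (Real.rpow_le_rpow (by norm_num) hx.le (by norm_num))
  have h5 : (0 : ℝ) ≤ x ^ (-(1 : ℝ) / 5) := Real.rpow_nonneg hx0.le _
  have := mul_le_mul_of_nonneg_right hkey h5
  calc (2 / x) ^ ((1 : ℝ) / 5) * (25 / 16)
      = (2 : ℝ) ^ ((1 : ℝ) / 5) * (25 / 16) * x ^ (-(1 : ℝ) / 5) := by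
        rw [Real.div_rpow (by norm_num) hx0.le,
          show (-(1:ℝ)/5) = -(1/5) by ring, Real.rpow_neg hx0.le]
        ring
    _ ≤ x ^ ((19 : ℝ) / 100) * x ^ (-(1 : ℝ) / 5) := this
    _ = x ^ (-(1 : ℝ) / 100) := by
        rw [← Real.rpow_add hx0]; norm_num

/-- Large deviations estimate (B.2): for `x > 22` and `n ≥ 1`, the `2n`-dimensional
Lebesgue measure of `{u ∈ [0,1]^{2n} : ∏ i, u i ≤ (2/x)^n}` is at most `x^{-n/100}`. -/
theorem product_uniform_small_bound (x : ℝ) (hx : 22 < x) (n : ℕ) (hn : 1 ≤ n) :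
    MeasureTheory.volume
        {u : Fin (2 * n) → ℝ | (∀ i, u i ∈ Set.Icc (0 : ℝ) 1) ∧ (∏ i, u i) ≤ (2 / x) ^ n}
      ≤ ENNReal.ofReal (x ^ (-(n : ℝ) / 100)) := by
  have hx0 : (0 : ℝ) < x := by linarith
  have h2x : (0 : ℝ) < 2 / x := by positivity
  set A : ℝ := (2 / x) ^ ((1 : ℝ) / 10) with hA
  have hA0 : 0 ≤ A := Real.rpow_nonneg h2x.le _
  set S : Set (Fin (2 * n) → ℝ) :=
    {u | (∀ i, u i ∈ Set.Icc (0 : ℝ) 1) ∧ (∏ i, u i) ≤ (2 / x) ^ n} with hS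
  set g : ℝ → ℝ≥0∞ := fun t =>
    (Icc (0 : ℝ) 1).indicator (fun t => ENNReal.ofReal (A * t ^ (-(1 : ℝ) / 5))) t with hg
  have hgmeas : Measurable g := by
    apply Measurable.indicator _ measurableSet_Icc
    exact (measurable_const.mul (by fun_prop : Measurable fun t : ℝ => t ^ (-(1:ℝ)/5))).ennreal_ofReal
  have hnull : volume (⋃ i : Fin (2 * n), {u : Fin (2 * n) → ℝ | u i = 0}) = 0 := by
    refine measure_iUnion_null fun i => ?_
    rw [volume_pi]
    exact Measure.pi_hyperplane _ i 0
  have hsub : S ⊆ (S ∩ {u | ∀ i, u i ≠ 0}) ∪ ⋃ i, {u : Fin (2 * n) → ℝ | u i = 0} := by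
    intro u hu
    by_cases h : ∀ i, u i ≠ 0
    · exact Or.inl ⟨hu, h⟩
    · push_neg at h
      obtain ⟨i, hi⟩ := h
      exact Or.inr (mem_iUnion.2 ⟨i, hi⟩)
  have hpoint : ∀ u ∈ S ∩ {u : Fin (2 * n) → ℝ | ∀ i, u i ≠ 0},
      1 ≤ ∏ i, g (u i) := by
    rintro u ⟨⟨hu1, hu2⟩, hune⟩
    have hpos : ∀ i, 0 < u i := fun i => lt_of_le_of_ne (hu1 i).1 (Ne.symm (hune i))
    have hgi : ∀ i, g (u i) = ENNReal.ofReal (A * (u i) ^ (-(1 : ℝ) / 5)) := fun i =>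
      indicator_of_mem (hu1 i) _
    rw [Finset.prod_congr rfl (fun i _ => hgi i),
      ← ENNReal.ofReal_prod_of_nonneg (fun i _ => mul_nonneg hA0 (Real.rpow_nonneg (hpos i).le _))]
    rw [show (1 : ℝ≥0∞) = ENNReal.ofReal 1 by simp]
    apply ENNReal.ofReal_le_ofReal
    have hP0 : 0 < ∏ i, u i := Finset.prod_pos fun i _ => hpos i
    have hprodeq : (∏ i, A * (u i) ^ (-(1 : ℝ) / 5))
        = A ^ (2 * n) * (∏ i, u i) ^ (-(1 : ℝ) / 5) := by
      rw [Finset.prod_mul_distrib, Finset.prod_const, Finset.card_univ, Fintype.card_fin,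
        Real.finset_prod_rpow _ _ (fun i _ => (hpos i).le)]
    rw [hprodeq]
    have h1 : A ^ (2 * n) * ((2 / x) ^ n) ^ (-(1 : ℝ) / 5) = 1 := by
      rw [hA, ← Real.rpow_natCast ((2 / x) ^ ((1 : ℝ) / 10)) (2 * n),
        ← Real.rpow_natCast (2 / x) n, ← Real.rpow_mul h2x.le, ← Real.rpow_mul h2x.le,
        ← Real.rpow_add h2x]
      have : (1 : ℝ) / 10 * ((2 * n : ℕ) : ℝ) + (n : ℝ) * (-(1 : ℝ) / 5) = 0 := by
        push_cast; ring
      rw [this, Real.rpow_zero]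
    calc (1 : ℝ) = A ^ (2 * n) * ((2 / x) ^ n) ^ (-(1 : ℝ) / 5) := h1.symm
      _ ≤ A ^ (2 * n) * (∏ i, u i) ^ (-(1 : ℝ) / 5) := by
          apply mul_le_mul_of_nonneg_left _ (pow_nonneg hA0 _)
          exact Real.rpow_le_rpow_of_nonpos hP0 hu2 (by norm_num)
  have hint : ∫⁻ t, g t = ENNReal.ofReal (A * (5 / 4)) := by
    rw [hg]
    rw [lintegral_indicator measurableSet_Icc]
    have hInt : IntegrableOn (fun t : ℝ => A * t ^ (-(1 : ℝ) / 5)) (Icc 0 1) := by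
      rw [integrableOn_Icc_iff_integrableOn_Ioc]
      have h := intervalIntegral.intervalIntegrable_rpow' (a := (0:ℝ)) (b := 1)
        (r := -(1 : ℝ) / 5) (by norm_num)
      rw [intervalIntegrable_iff_integrableOn_Ioc_of_le (by norm_num : (0:ℝ) ≤ 1)] at h
      exact h.const_mul A
    have hnn : 0 ≤ᵐ[volume.restrict (Icc (0:ℝ) 1)] fun t : ℝ => A * t ^ (-(1 : ℝ) / 5) := by
      refine ae_restrict_of_forall_mem measurableSet_Icc fun t ht => ?_
      have := Real.rpow_nonneg ht.1 (-(1 : ℝ) / 5)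
      positivity
    rw [← ofReal_integral_eq_lintegral_ofReal hInt hnn]
    congr 1
    rw [integral_Icc_eq_integral_Ioc,
      ← intervalIntegral.integral_of_le (by norm_num : (0:ℝ) ≤ 1),
      intervalIntegral.integral_const_mul, integral_rpow (Or.inl (by norm_num))]
    norm_num [Real.zero_rpow]
  have hfinal : (ENNReal.ofReal (A * (5 / 4))) ^ (2 * n)
      ≤ ENNReal.ofReal (x ^ (-(n : ℝ) / 100)) := by
    rw [← ENNReal.ofReal_pow (by positivity)]
    apply ENNReal.ofReal_le_ofReal
    have hbase : (A * (5 / 4)) ^ 2 = (2 / x) ^ ((1 : ℝ) / 5) * (25 / 16) := by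
      rw [mul_pow, hA, ← Real.rpow_natCast ((2 / x) ^ ((1 : ℝ) / 10)) 2,
        ← Real.rpow_mul h2x.le]
      norm_num
    calc (A * (5 / 4)) ^ (2 * n) = ((A * (5 / 4)) ^ 2) ^ n := by rw [← pow_mul]
      _ = ((2 / x) ^ ((1 : ℝ) / 5) * (25 / 16)) ^ n := by rw [hbase]
      _ ≤ (x ^ (-(1 : ℝ) / 100)) ^ n := pow_le_pow_left₀ (by positivity) (key_scalar x hx) n
      _ = x ^ (-(n : ℝ) / 100) := by
          rw [← Real.rpow_natCast (x ^ (-(1 : ℝ) / 100)) n, ← Real.rpow_mul hx0.le]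
          congr 1
          ring
  calc volume S ≤ volume ((S ∩ {u | ∀ i, u i ≠ 0})
          ∪ ⋃ i, {u : Fin (2 * n) → ℝ | u i = 0}) := measure_mono hsub
    _ ≤ volume (S ∩ {u | ∀ i, u i ≠ 0})
          + volume (⋃ i, {u : Fin (2 * n) → ℝ | u i = 0}) := measure_union_le _ _
    _ = volume (S ∩ {u | ∀ i, u i ≠ 0}) := by rw [hnull, add_zero]
    _ ≤ ∫⁻ u : Fin (2 * n) → ℝ, ∏ i, g (u i) := by
        refine meas_le_lintegral₀ ?_ hpoint
        exact (Finset.measurable_prod Finset.univ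
          (fun i _ => hgmeas.comp (measurable_pi_apply i))).aemeasurable
    _ = (∫⁻ t, g t) ^ (2 * n) := lintegral_pi_prod_eq_pow g hgmeas
    _ = (ENNReal.ofReal (A * (5 / 4))) ^ (2 * n) := by rw [hint]
    _ ≤ ENNReal.ofReal (x ^ (-(n : ℝ) / 100)) := hfinal
end

section
/- Define the operator K on bounded measurable functions f : [0,1] → ℝ by Kf(s) := (2/(2β+1))·[∫_s^1 x^{2β}·f(s/x) dx + ∫_0^s (1−x)^{2β}·f((1−s)/(1−x)) dx] + 2·B(β+1, β+1)·h(s)²/(β+1). Then for all bounded measurable f, g : [0,1] → ℝ, we have sup_{s∈[0,1]} |Kf(s) − Kg(s)| ≤ (4/(2β+1)²)·sup_{s∈[0,1]} |f(s) − g(s)|, and moreover 4/(2β+1)² < 1, so K is a strict contraction in the supremum norm on bounded measurable functions on [0,1]. -/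
open MeasureTheory Real Set

/-- The Beta function `B(a,b) = ∫₀¹ t^{a-1}(1-t)^{b-1} dt`. -/
noncomputable def Bfun (a b : ℝ) : ℝ := ∫ t in (0:ℝ)..1, t ^ (a - 1) * (1 - t) ^ (b - 1)

/-- The second-moment integral operator `K`. -/
noncomputable def K (f : ℝ → ℝ) (s : ℝ) : ℝ :=
  (2 / (2 * β + 1)) *
      ((∫ x in s..1, x ^ (2 * β) * f (s / x)) +
        ∫ x in (0:ℝ)..s, (1 - x) ^ (2 * β) * f ((1 - s) / (1 - x)))
    + 2 * Bfun (β + 1) (β + 1) * (h s) ^ 2 / (β + 1)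

/- Substituting `x ↦ 1 - x` in the second integral turns `K φ s` into an affine combination of
`J φ s` and `J φ (1 - s)`, where `J φ s = ∫ₛ¹ x^{2β} φ(s/x) dx = dilationIntegral (2 * β) φ s`.
Since `s/x ∈ [0,1]` for `x ∈ (s,1]`, both are bounded by `‖φ‖_∞ ∫₀¹ x^{2β} dx = ‖φ‖_∞/(2β+1)`,
so `K` is Lipschitz with constant `2·2/(2β+1)²`, which is `< 1` because `β > 1/2`, i.e. `√17 > 4`. -/

noncomputable def dilationIntegral (p : ℝ) (φ : ℝ → ℝ) (s : ℝ) : ℝ :=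
  ∫ x in s..1, x ^ p * φ (s / x)

section DilationIntegral

variable {p s M : ℝ} {φ : ℝ → ℝ}

lemma div_mem_Icc_of_mem_Ioc {x : ℝ} (hs : 0 ≤ s) (hx : x ∈ Ioc s 1) :
    s / x ∈ Icc (0 : ℝ) 1 :=
  ⟨div_nonneg hs (hs.trans hx.1.le), div_le_one_of_le₀ hx.1.le (hs.trans hx.1.le)⟩

lemma norm_rpow_mul_comp_div_le (hφ : ∀ t ∈ Icc (0 : ℝ) 1, |φ t| ≤ M) (hs : 0 ≤ s) :
    ∀ x ∈ Ioc s 1, ‖x ^ p * φ (s / x)‖ ≤ x ^ p * M := by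
  intro x hx
  have hxp : 0 ≤ x ^ p := rpow_nonneg (hs.trans hx.1.le) p
  rw [Real.norm_eq_abs, abs_mul, abs_of_nonneg hxp]
  exact mul_le_mul_of_nonneg_left (hφ _ (div_mem_Icc_of_mem_Ioc hs hx)) hxp

lemma intervalIntegrable_rpow_mul_const (hp : -1 < p) (a b : ℝ) :
    IntervalIntegrable (fun x => x ^ p * M) volume a b :=
  (intervalIntegral.intervalIntegrable_rpow' hp).mul_const M

lemma intervalIntegrable_dilation (hφm : Measurable φ)
    (hφ : ∀ t ∈ Icc (0 : ℝ) 1, |φ t| ≤ M) (hp : -1 < p) (hs : 0 ≤ s) (hs1 : s ≤ 1) :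
    IntervalIntegrable (fun x => x ^ p * φ (s / x)) volume s 1 := by
  refine (intervalIntegrable_rpow_mul_const (M := M) hp s 1).mono_fun' (by fun_prop) ?_
  rw [uIoc_of_le hs1]
  exact (ae_restrict_iff' measurableSet_Ioc).2 (.of_forall (norm_rpow_mul_comp_div_le hφ hs))

lemma dilationIntegral_sub {ψ : ℝ → ℝ} {N : ℝ} (hφm : Measurable φ) (hψm : Measurable ψ)
    (hφ : ∀ t ∈ Icc (0 : ℝ) 1, |φ t| ≤ M) (hψ : ∀ t ∈ Icc (0 : ℝ) 1, |ψ t| ≤ N)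
    (hp : -1 < p) (hs : 0 ≤ s) (hs1 : s ≤ 1) :
    dilationIntegral p φ s - dilationIntegral p ψ s = dilationIntegral p (φ - ψ) s := by
  simp only [dilationIntegral, Pi.sub_apply, mul_sub]
  exact (intervalIntegral.integral_sub (intervalIntegrable_dilation hφm hφ hp hs hs1)
    (intervalIntegrable_dilation hψm hψ hp hs hs1)).symm

lemma abs_dilationIntegral_le (hφ : ∀ t ∈ Icc (0 : ℝ) 1, |φ t| ≤ M) (hp : -1 < p)
    (hs : 0 ≤ s) (hs1 : s ≤ 1) :
    |dilationIntegral p φ s| ≤ M / (p + 1) := by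
  have hM : 0 ≤ M := (abs_nonneg _).trans (hφ 0 (left_mem_Icc.2 zero_le_one))
  have hp1 : 0 < p + 1 := by linarith
  calc |dilationIntegral p φ s|
      ≤ ∫ x in s..1, x ^ p * M :=
        intervalIntegral.norm_integral_le_of_norm_le hs1
          (.of_forall (norm_rpow_mul_comp_div_le hφ hs)) (intervalIntegrable_rpow_mul_const hp s 1)
    _ = (1 - s ^ (p + 1)) / (p + 1) * M := by
        rw [intervalIntegral.integral_mul_const, integral_rpow (.inl hp), one_rpow]
    _ ≤ 1 / (p + 1) * M := by
        gcongr
        exact sub_le_self 1 (rpow_nonneg hs _)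
    _ = M / (p + 1) := by ring

end DilationIntegral

lemma one_half_lt_β : 1 / 2 < β := by
  have : (4 : ℝ) < √17 := by
    rw [show (4 : ℝ) = √(4 ^ 2) by simp]
    exact sqrt_lt_sqrt (by norm_num) (by norm_num)
  unfold β
  linarith

lemma K_eq_dilationIntegral (φ : ℝ → ℝ) (s : ℝ) :
    K φ s = 2 / (2 * β + 1) *
        (dilationIntegral (2 * β) φ s + dilationIntegral (2 * β) φ (1 - s))
      + 2 * Bfun (β + 1) (β + 1) * h s ^ 2 / (β + 1) := by
  have reflect := intervalIntegral.integral_comp_sub_left (a := 0) (b := s)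
    (fun y => y ^ (2 * β) * φ ((1 - s) / y)) 1
  rw [sub_zero] at reflect
  rw [K, dilationIntegral, dilationIntegral, reflect]

lemma le_iSup_abs_sub {α : Type*} {A : Set α} {f g : α → ℝ}
    (hf : ∃ M, ∀ t ∈ A, |f t| ≤ M) (hg : ∃ M, ∀ t ∈ A, |g t| ≤ M) :
    ∀ t ∈ A, |f t - g t| ≤ ⨆ t : A, |f t.1 - g t.1| := by
  obtain ⟨Mf, hMf⟩ := hf
  obtain ⟨Mg, hMg⟩ := hg
  have hbdd : BddAbove (range fun t : A => |f t.1 - g t.1|) := by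
    refine ⟨Mf + Mg, ?_⟩
    rintro _ ⟨t, rfl⟩
    exact (abs_sub _ _).trans (add_le_add (hMf t t.2) (hMg t t.2))
  exact fun t ht => le_ciSup hbdd ⟨t, ht⟩

lemma K_sub_K_eq {f g : ℝ → ℝ} {Mf Mg s : ℝ} (hf : Measurable f) (hg : Measurable g)
    (hMf : ∀ t ∈ Icc (0 : ℝ) 1, |f t| ≤ Mf) (hMg : ∀ t ∈ Icc (0 : ℝ) 1, |g t| ≤ Mg)
    (hs : s ∈ Icc (0 : ℝ) 1) :
    K f s - K g s = 2 / (2 * β + 1) *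
      (dilationIntegral (2 * β) (f - g) s + dilationIntegral (2 * β) (f - g) (1 - s)) := by
  have hp : -1 < 2 * β := by linarith [one_half_lt_β]
  rw [K_eq_dilationIntegral, K_eq_dilationIntegral,
    ← dilationIntegral_sub hf hg hMf hMg hp hs.1 hs.2,
    ← dilationIntegral_sub hf hg hMf hMg hp (by linarith [hs.2]) (by linarith [hs.1])]
  ring

/-- `K` is a strict contraction (with factor `4/(2β+1)² < 1`) in the supremum norm
on bounded measurable functions on `[0,1]`. -/
theorem K_strict_contraction (f g : ℝ → ℝ) (hf : Measurable f) (hg : Measurable g)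
    (hfb : ∃ M, ∀ t ∈ Set.Icc (0 : ℝ) 1, |f t| ≤ M)
    (hgb : ∃ M, ∀ t ∈ Set.Icc (0 : ℝ) 1, |g t| ≤ M) :
    (∀ s ∈ Set.Icc (0 : ℝ) 1,
        |K f s - K g s| ≤ (4 / (2 * β + 1) ^ 2) * ⨆ t : Set.Icc (0 : ℝ) 1, |f t.1 - g t.1|)
      ∧ 4 / (2 * β + 1) ^ 2 < 1 := by
  have hβ := one_half_lt_β
  have hp : -1 < 2 * β := by linarith
  refine ⟨fun s ⟨hs0, hs1⟩ => ?_, ?_⟩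
  · set S := ⨆ t : Set.Icc (0 : ℝ) 1, |f t.1 - g t.1|
    have hS : ∀ t ∈ Icc (0 : ℝ) 1, |(f - g) t| ≤ S := le_iSup_abs_sub hfb hgb
    obtain ⟨Mf, hMf⟩ := hfb
    obtain ⟨Mg, hMg⟩ := hgb
    have hbound := add_le_add (abs_dilationIntegral_le hS hp hs0 hs1)
      (abs_dilationIntegral_le hS hp (by linarith : 0 ≤ 1 - s) (by linarith))
    rw [K_sub_K_eq hf hg hMf hMg ⟨hs0, hs1⟩, abs_mul, abs_of_pos (by positivity)]
    calc _ ≤ 2 / (2 * β + 1) * (S / (2 * β + 1) + S / (2 * β + 1)) := by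
          gcongr
          exact (abs_add_le _ _).trans hbound
      _ = 4 / (2 * β + 1) ^ 2 * S := by field_simp; ring
  · rw [div_lt_one (by positivity)]
    nlinarith
end

section
/- Let (c_m)_{m≥1} be the sequence of real numbers defined by c₁ = 1 and, for m ≥ 2, c_m = [(βm + 1)/((m−1)·(m + 1 − (3/2)βm))]·∑_{ℓ=1}^{m−1} C(m, ℓ)·B(βℓ + 1, β(m−ℓ) + 1)·c_ℓ·c_{m−ℓ}. Then there exists a constant A₁ > 0 such that c_m ≤ A₁^m·m^m for all m ≥ 1. (In particular, the sequence (c_m) satisfies the Carleman condition, so the moment problem with moments (c_m) is determinate.) -/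
open MeasureTheory Real Set

/-!
For `β ≤ 3/5` the prefactor of the recursion is at most `2` and the Beta values lie in `[0, 1]`,
so `c_m ≤ K ∑ C(m,ℓ) c_ℓ c_{m-ℓ}` with `K = 2`. Such a sequence satisfies
`c_m ≤ g_m := (8K)^m m^m / (8K m²)` by strong induction: since `C(m,ℓ) ℓ^ℓ (m-ℓ)^(m-ℓ) ≤ m^m`
(one term of the binomial expansion of `(ℓ + (m-ℓ))^m`), the factors `(8K)^ℓ ℓ^ℓ` recombine into
`(8K)^m m^m`, and what is left is `∑ 1/(ℓ²(m-ℓ)²) ≤ 8/m²`, because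
`1/(ℓ² j²) ≤ 2/(ℓ+j)² · (1/ℓ² + 1/j²)` and `∑ 1/ℓ² ≤ 2`. The extra factor `1/m²` in `g_m` is what
lets the induction close.
-/

open Finset

theorem choose_mul_pow_mul_pow_le_add_pow {R : Type*} [CommSemiring R] [PartialOrder R]
    [IsOrderedRing R] {x y : R} (hx : 0 ≤ x) (hy : 0 ≤ y) {n k : ℕ} (hk : k ≤ n) :
    n.choose k * x ^ k * y ^ (n - k) ≤ (x + y) ^ n := by
  rw [add_pow]
  calc (n.choose k : R) * x ^ k * y ^ (n - k) = x ^ k * y ^ (n - k) * n.choose k := by ring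
    _ ≤ ∑ i ∈ range (n + 1), x ^ i * y ^ (n - i) * n.choose i :=
      single_le_sum (f := fun i => x ^ i * y ^ (n - i) * n.choose i)
        (fun i _ => by positivity) (mem_range.2 (Nat.lt_succ_of_le hk))

theorem sum_Ico_one_inv_sq_le_two (m : ℕ) : ∑ ℓ ∈ Ico 1 m, 1 / (ℓ : ℝ) ^ 2 ≤ 2 := by
  simpa [← Finset.Ico_add_one_left_eq_Ioo] using sum_Ioo_inv_sq_le (α := ℝ) 0 m

def binomialConvolution (c : ℕ → ℝ) (m : ℕ) : ℝ :=
  ∑ ℓ ∈ Ico 1 m, (m.choose ℓ : ℝ) * c ℓ * c (m - ℓ)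

noncomputable def majorant (K : ℝ) (m : ℕ) : ℝ := (8 * K) ^ m * (m : ℝ) ^ m / (8 * K * (m : ℝ) ^ 2)

theorem majorant_nonneg {K : ℝ} (hK : 0 ≤ K) (m : ℕ) : 0 ≤ majorant K m := by
  unfold majorant; positivity

theorem choose_mul_majorant_mul_majorant_le {K : ℝ} (hK : 0 < K) {ℓ j : ℕ} (hℓ : 1 ≤ ℓ)
    (hj : 1 ≤ j) :
    (ℓ + j).choose ℓ * majorant K ℓ * majorant K j ≤
      majorant K (ℓ + j) / (4 * K) * (1 / (ℓ : ℝ) ^ 2 + 1 / (j : ℝ) ^ 2) := by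
  have hℓ0 : (0 : ℝ) < ℓ := by exact_mod_cast hℓ
  have hj0 : (0 : ℝ) < j := by exact_mod_cast hj
  have hchoose : ((ℓ + j).choose ℓ : ℝ) * (ℓ : ℝ) ^ ℓ * (j : ℝ) ^ j ≤ ((ℓ : ℝ) + j) ^ (ℓ + j) := by
    simpa using choose_mul_pow_mul_pow_le_add_pow hℓ0.le hj0.le (Nat.le_add_right ℓ j)
  have hinv : 1 / ((ℓ : ℝ) ^ 2 * (j : ℝ) ^ 2) ≤
      2 / ((ℓ : ℝ) + j) ^ 2 * (1 / (ℓ : ℝ) ^ 2 + 1 / (j : ℝ) ^ 2) := by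
    rw [div_add_div _ _ (by positivity) (by positivity), div_mul_div_comm,
      div_le_div_iff₀ (by positivity) (by positivity)]
    nlinarith [mul_le_mul_of_nonneg_right (add_sq_le (a := (ℓ : ℝ)) (b := j))
      (by positivity : (0 : ℝ) ≤ (ℓ : ℝ) ^ 2 * (j : ℝ) ^ 2)]
  calc (ℓ + j).choose ℓ * majorant K ℓ * majorant K j
      = (8 * K) ^ (ℓ + j) / (64 * K ^ 2) * (((ℓ + j).choose ℓ : ℝ) * (ℓ : ℝ) ^ ℓ * (j : ℝ) ^ j) *
          (1 / ((ℓ : ℝ) ^ 2 * (j : ℝ) ^ 2)) := by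
        unfold majorant; rw [pow_add]; field_simp; ring
    _ ≤ (8 * K) ^ (ℓ + j) / (64 * K ^ 2) * ((ℓ : ℝ) + j) ^ (ℓ + j) *
          (2 / ((ℓ : ℝ) + j) ^ 2 * (1 / (ℓ : ℝ) ^ 2 + 1 / (j : ℝ) ^ 2)) := by
        gcongr
    _ = majorant K (ℓ + j) / (4 * K) * (1 / (ℓ : ℝ) ^ 2 + 1 / (j : ℝ) ^ 2) := by
        unfold majorant; push_cast; field_simp; ring

theorem binomialConvolution_majorant_le {K : ℝ} (hK : 0 < K) (m : ℕ) :
    binomialConvolution (majorant K) m ≤ majorant K m / K := by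
  have hsym : ∑ ℓ ∈ Ico 1 m, 1 / ((m - ℓ : ℕ) : ℝ) ^ 2 = ∑ ℓ ∈ Ico 1 m, 1 / (ℓ : ℝ) ^ 2 := by
    rw [sum_Ico_reflect (fun k => 1 / (k : ℝ) ^ 2) 1 m.le_succ]
    simp
  have hsum : ∑ ℓ ∈ Ico 1 m, (1 / (ℓ : ℝ) ^ 2 + 1 / ((m - ℓ : ℕ) : ℝ) ^ 2) ≤ 4 := by
    rw [sum_add_distrib, hsym]; linarith [sum_Ico_one_inv_sq_le_two m]
  calc binomialConvolution (majorant K) m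
      ≤ ∑ ℓ ∈ Ico 1 m, majorant K m / (4 * K) * (1 / (ℓ : ℝ) ^ 2 + 1 / ((m - ℓ : ℕ) : ℝ) ^ 2) := by
        refine sum_le_sum fun ℓ hℓ => ?_
        obtain ⟨hℓ1, hℓm⟩ := mem_Ico.1 hℓ
        obtain ⟨j, rfl⟩ := Nat.exists_eq_add_of_lt hℓm
        simpa [add_assoc] using
          choose_mul_majorant_mul_majorant_le hK hℓ1 (Nat.le_add_left 1 j)
    _ ≤ majorant K m / (4 * K) * 4 := by
        rw [← mul_sum]; gcongr; have := majorant_nonneg hK.le m; positivity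
    _ = majorant K m / K := by field_simp

theorem binomialConvolution_mono {c d : ℕ → ℝ} {m : ℕ}
    (h : ∀ ℓ, 1 ≤ ℓ → ℓ < m → 0 ≤ c ℓ ∧ c ℓ ≤ d ℓ) :
    binomialConvolution c m ≤ binomialConvolution d m := by
  refine sum_le_sum fun ℓ hℓ => ?_
  obtain ⟨hℓ1, hℓm⟩ := mem_Ico.1 hℓ
  obtain ⟨hcℓ, hcdℓ⟩ := h ℓ hℓ1 hℓm
  obtain ⟨hcj, hcdj⟩ := h (m - ℓ) (by omega) (by omega)
  have := hcℓ.trans hcdℓ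
  gcongr

theorem le_majorant_of_le_mul_binomialConvolution {K : ℝ} (hK : 0 < K) {c : ℕ → ℝ}
    (hc0 : ∀ m, 1 ≤ m → 0 ≤ c m) (hc1 : c 1 ≤ 1)
    (hrec : ∀ m, 2 ≤ m → c m ≤ K * binomialConvolution c m) :
    ∀ m, 1 ≤ m → c m ≤ majorant K m := by
  intro m
  induction m using Nat.strong_induction_on with
  | _ m ih =>
    intro hm
    obtain rfl | hm2 := hm.eq_or_lt
    · simpa [majorant, hK.ne'] using hc1
    calc c m ≤ K * binomialConvolution c m := hrec m hm2
      _ ≤ K * binomialConvolution (majorant K) m := by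
        gcongr
        exact binomialConvolution_mono fun ℓ hℓ1 hℓm => ⟨hc0 ℓ hℓ1, ih ℓ hℓm hℓ1⟩
      _ ≤ K * (majorant K m / K) := by gcongr; exact binomialConvolution_majorant_le hK m
      _ = majorant K m := by field_simp

theorem Bfun_nonneg (a b : ℝ) : 0 ≤ Bfun a b :=
  intervalIntegral.integral_nonneg zero_le_one fun _ ht =>
    mul_nonneg (rpow_nonneg ht.1 _) (rpow_nonneg (sub_nonneg.2 ht.2) _)

theorem Bfun_le_one {a b : ℝ} (ha : 1 ≤ a) (hb : 1 ≤ b) : Bfun a b ≤ 1 := by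
  have hnorm : ‖Bfun a b‖ ≤ 1 * |(1 : ℝ) - 0| := by
    refine intervalIntegral.norm_integral_le_of_norm_le_const fun t ht => ?_
    rw [uIoc_of_le zero_le_one] at ht
    have ht0 : 0 ≤ 1 - t := sub_nonneg.2 ht.2
    rw [norm_mul, norm_of_nonneg (rpow_nonneg ht.1.le _), norm_of_nonneg (rpow_nonneg ht0 _)]
    exact mul_le_one₀ (rpow_le_one ht.1.le ht.2 (by linarith)) (rpow_nonneg ht0 _)
      (rpow_le_one ht0 (by linarith [ht.1]) (by linarith))
  simpa using (le_abs_self _).trans hnorm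

theorem β_nonneg : 0 ≤ β := by
  have h17 : √17 ^ 2 = 17 := sq_sqrt (by norm_num)
  unfold β; nlinarith [sqrt_nonneg 17]

theorem β_le_three_fifths : β ≤ 3 / 5 := by
  have h17 : √17 ^ 2 = 17 := sq_sqrt (by norm_num)
  unfold β; nlinarith [sqrt_nonneg 17]

def SatisfiesMomentRecursion (b : ℝ) (c : ℕ → ℝ) : Prop :=
  ∀ m : ℕ, 2 ≤ m →
    c m = ((b * m + 1) / (((m : ℝ) - 1) * ((m : ℝ) + 1 - (3 / 2) * b * m))) *
      ∑ ℓ ∈ Ico 1 m, (m.choose ℓ : ℝ) * Bfun (b * ℓ + 1) (b * ((m - ℓ : ℕ) : ℝ) + 1) * c ℓ * c (m - ℓ)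

theorem recursion_coeff_nonneg {b m : ℝ} (hb0 : 0 ≤ b) (hb : b ≤ 3 / 5) (hm : 2 ≤ m) :
    0 ≤ (b * m + 1) / ((m - 1) * (m + 1 - (3 / 2) * b * m)) := by
  have : b * m ≤ 3 / 5 * m := by gcongr
  exact div_nonneg (by positivity) (mul_nonneg (by linarith) (by linarith))

theorem recursion_coeff_le_two {b m : ℝ} (hb : b ≤ 3 / 5) (hm : 2 ≤ m) :
    (b * m + 1) / ((m - 1) * (m + 1 - (3 / 2) * b * m)) ≤ 2 := by
  have : b * m ≤ 3 / 5 * m := by gcongr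
  rw [div_le_iff₀ (mul_pos (by linarith) (by linarith))]
  nlinarith

namespace SatisfiesMomentRecursion

variable {b : ℝ} {c : ℕ → ℝ}

theorem nonneg (h : SatisfiesMomentRecursion b c) (hb0 : 0 ≤ b) (hb : b ≤ 3 / 5) (hc1 : 0 ≤ c 1) :
    ∀ m, 1 ≤ m → 0 ≤ c m := by
  intro m
  induction m using Nat.strong_induction_on with
  | _ m ih =>
    intro hm
    obtain rfl | hm2 := hm.eq_or_lt
    · exact hc1
    rw [h m hm2]
    refine mul_nonneg (recursion_coeff_nonneg hb0 hb (by exact_mod_cast hm2)) <|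
      sum_nonneg fun ℓ hℓ => ?_
    obtain ⟨hℓ1, hℓm⟩ := mem_Ico.1 hℓ
    have := ih ℓ hℓm hℓ1
    have := ih (m - ℓ) (by omega) (by omega)
    have := Bfun_nonneg (b * ℓ + 1) (b * ((m - ℓ : ℕ) : ℝ) + 1)
    positivity

theorem le_two_mul_binomialConvolution (h : SatisfiesMomentRecursion b c) (hb0 : 0 ≤ b)
    (hb : b ≤ 3 / 5) (hc0 : ∀ m, 1 ≤ m → 0 ≤ c m) (m : ℕ) (hm : 2 ≤ m) :
    c m ≤ 2 * binomialConvolution c m := by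
  have hmR : (2 : ℝ) ≤ m := by exact_mod_cast hm
  rw [h m hm]
  refine mul_le_mul (recursion_coeff_le_two hb hmR) (sum_le_sum fun ℓ hℓ => ?_)
    (sum_nonneg fun ℓ hℓ => ?_) zero_le_two
  all_goals
    obtain ⟨hℓ1, hℓm⟩ := mem_Ico.1 hℓ
    have := hc0 ℓ hℓ1
    have := hc0 (m - ℓ) (by omega)
    have := Bfun_nonneg (b * ℓ + 1) (b * ((m - ℓ : ℕ) : ℝ) + 1)
  · have hB1 := Bfun_le_one (a := b * ℓ + 1) (b := b * ((m - ℓ : ℕ) : ℝ) + 1)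
      (le_add_of_nonneg_left (by positivity)) (le_add_of_nonneg_left (by positivity))
    gcongr ?_ * _ * _
    exact mul_le_of_le_one_right (by positivity) hB1
  · positivity

end SatisfiesMomentRecursion

/-- If `(c_m)` satisfies `c₁ = 1` and, for `m ≥ 2`,
`c_m = (βm+1)/((m-1)(m+1-(3/2)βm)) ∑_{ℓ=1}^{m-1} C(m,ℓ) B(βℓ+1, β(m-ℓ)+1) c_ℓ c_{m-ℓ}`,
then there is `A₁ > 0` with `c_m ≤ A₁^m m^m` for all `m ≥ 1`
(so the Carleman condition holds and the moment problem is determinate). -/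
theorem moment_sequence_growth_bound (c : ℕ → ℝ) (hc1 : c 1 = 1)
    (hrec : ∀ m : ℕ, 2 ≤ m →
      c m = ((β * m + 1) / (((m : ℝ) - 1) * ((m : ℝ) + 1 - (3 / 2) * β * m))) *
        ∑ ℓ ∈ Finset.Ico 1 m,
          (m.choose ℓ : ℝ) * Bfun (β * ℓ + 1) (β * ((m - ℓ : ℕ) : ℝ) + 1) *
            c ℓ * c (m - ℓ)) :
    ∃ A₁ : ℝ, 0 < A₁ ∧ ∀ m : ℕ, 1 ≤ m → c m ≤ A₁ ^ m * (m : ℝ) ^ m := by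
  have hrec' : SatisfiesMomentRecursion β c := hrec
  have hc0 := hrec'.nonneg β_nonneg β_le_three_fifths (hc1 ▸ zero_le_one)
  have hbound := le_majorant_of_le_mul_binomialConvolution two_pos hc0 hc1.le
    (hrec'.le_two_mul_binomialConvolution β_nonneg β_le_three_fifths hc0)
  refine ⟨16, by norm_num, fun m hm => (hbound m hm).trans ?_⟩
  have hmR : (1 : ℝ) ≤ m := by exact_mod_cast hm
  calc majorant 2 m = 16 ^ m * (m : ℝ) ^ m / (16 * (m : ℝ) ^ 2) := by norm_num [majorant]
    _ ≤ 16 ^ m * (m : ℝ) ^ m := div_le_self (by positivity) (by nlinarith)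
end
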